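/- arXiv:1307.5968 — 4 statements merged into one kernel-verified Lean document; each statement's English description precedes it below -/
import Mathlib

section
/- Let (α_l)_{l≥1} be a sequence of real numbers with Σ_{l≥1} α_l² = 1, and suppose b > 0, ω ∈ ℝ, j ≥ 1 satisfy Σ_{l≥1} (ω - (2l-1)b) α_l² ≥ 0 and ω < 2jb. Then Σ_{l=1}^j α_l² ≥ ((2j+1)b - ω)/(2jb) > 0. -/
/-- Abstract spectral-weight lemma: if `∑ αₗ² = 1` (indices `l = 0,1,…`
representing the `(l+1)`-st mode with energy `(2l+1)b`),
`∑ (ω - (2l+1)b) αₗ² ≥ 0` and `ω < 2jb`, then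
`∑_{l < j} αₗ² ≥ ((2j+1)b - ω)/(2jb) > 0`. -/
theorem spectral_weight_lower_bound
    (α : ℕ → ℝ) (b ω : ℝ) (j : ℕ) (hj : 1 ≤ j) (hb : 0 < b)
    (hsum1 : Summable fun l => α l ^ 2)
    (hnorm : ∑' l : ℕ, α l ^ 2 = 1)
    (hsum2 : Summable fun l : ℕ => (ω - (2 * (l : ℝ) + 1) * b) * α l ^ 2)
    (hpos : 0 ≤ ∑' l : ℕ, (ω - (2 * (l : ℝ) + 1) * b) * α l ^ 2)
    (hω : ω < 2 * (j : ℝ) * b) :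
    ((2 * (j : ℝ) + 1) * b - ω) / (2 * (j : ℝ) * b)
        ≤ ∑ l ∈ Finset.range j, α l ^ 2 ∧
      0 < ((2 * (j : ℝ) + 1) * b - ω) / (2 * (j : ℝ) * b) := by
  have hjb : (0:ℝ) < 2 * (j : ℝ) * b := by
    have : (1:ℝ) ≤ (j : ℝ) := by exact_mod_cast hj
    nlinarith
  set S := ∑ l ∈ Finset.range j, α l ^ 2 with hS
  set c := ω - (2 * (j : ℝ) + 1) * b with hc
  clear_value S c
  have hcneg : c ≤ 0 := by simp only [hc]; nlinarith
  -- split the tsum of hsum2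
  have hsplit := (Summable.sum_add_tsum_nat_add j hsum2).symm
  -- tail summability
  have hsum1' : Summable fun l : ℕ => α (l + j) ^ 2 :=
    (summable_nat_add_iff (f := fun l => α l ^ 2) j).2 hsum1
  have hsum2' : Summable fun l : ℕ =>
      (ω - (2 * ((l + j : ℕ) : ℝ) + 1) * b) * α (l + j) ^ 2 :=
    (summable_nat_add_iff
      (f := fun l : ℕ => (ω - (2 * (l : ℝ) + 1) * b) * α l ^ 2) j).2 hsum2
  -- tail bound : each term ≤ c * α(l+j)^2
  have htail : (∑' l : ℕ, (ω - (2 * ((l + j : ℕ) : ℝ) + 1) * b) * α (l + j) ^ 2)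
      ≤ c * (1 - S) := by
    have h1 : (∑' l : ℕ, (ω - (2 * ((l + j : ℕ) : ℝ) + 1) * b) * α (l + j) ^ 2)
        ≤ ∑' l : ℕ, c * α (l + j) ^ 2 := by
      refine Summable.tsum_le_tsum (fun l => ?_) hsum2' (hsum1'.mul_left c)
      have h2 : (0:ℝ) ≤ α (l + j) ^ 2 := sq_nonneg _
      have h3 : ((j:ℝ)) ≤ ((l + j : ℕ) : ℝ) := by
        push_cast; linarith [Nat.cast_nonneg (α := ℝ) l]
      have : ω - (2 * ((l + j : ℕ) : ℝ) + 1) * b ≤ c := by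
        simp only [hc]; nlinarith
      nlinarith
    have h4 : (∑' l : ℕ, c * α (l + j) ^ 2) = c * (1 - S) := by
      rw [tsum_mul_left]
      have := (Summable.sum_add_tsum_nat_add j hsum1).symm
      rw [hnorm] at this
      have htail' : ∑' l : ℕ, α (l + j) ^ 2 = 1 - S := by
        simp only [hS]; linarith
      rw [htail']
    linarith [h1, h4.le, h4.ge]
  -- head bound : each term ≤ (ω - b) * α l ^ 2
  have hhead : (∑ l ∈ Finset.range j, (ω - (2 * (l : ℝ) + 1) * b) * α l ^ 2)
      ≤ (ω - b) * S := by
    rw [hS, Finset.mul_sum]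
    refine Finset.sum_le_sum fun l _ => ?_
    have h2 : (0:ℝ) ≤ α l ^ 2 := sq_nonneg _
    have h3 : (0:ℝ) ≤ (l : ℝ) := Nat.cast_nonneg l
    nlinarith [mul_nonneg (mul_nonneg h3 hb.le) h2]
  rw [hsplit] at hpos
  have key : (2 * (j : ℝ) + 1) * b - ω ≤ S * (2 * (j : ℝ) * b) := by
    have := hpos
    simp only [hc] at htail
    nlinarith
  constructor
  · rw [div_le_iff₀ hjb]; linarith
  · apply div_pos _ hjb; nlinarith
end

section
/- Let (α_l)_{l≥1} be real with Σ_{l≥1} α_l² = 1, let j ≥ 1, b_+ > 0, δ ∈ (0, 2j-1), and ω ∈ ℝ. Assume Σ_{l≥1} (r² ω - (2l-1) b_+) α_l² ≥ 0 for some r with r² ω - (2l-1) b_+ ≤ 2j b_+ for all 1 ≤ l ≤ j, and (2l-1) b_+ - r² ω ≥ ((2j+1)/(2j-1)) δ b_+ for all l ≥ j+1. Then Σ_{l=1}^j α_l² ≥ δ/(2(2j-1)). -/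
set_option maxHeartbeats 1000000


/-- Abstract spectral-weight lemma (version (3.20)): with `∑ αₗ² = 1`
(index `l` representing the `(l+1)`-st mode with energy `(2l+1)b₊`),
`∑ (r²ω - (2l+1)b₊) αₗ² ≥ 0`, `r²ω - (2l+1)b₊ ≤ 2j b₊` for `l < j`, and
`(2l+1)b₊ - r²ω ≥ ((2j+1)/(2j-1)) δ b₊` for `l ≥ j` with `0 < δ < 2j-1`,
one has `∑_{l < j} αₗ² ≥ δ/(2(2j-1))`. -/
theorem spectral_weight_lower_bound'
    (α : ℕ → ℝ) (bp ω r δ : ℝ) (j : ℕ) (hj : 1 ≤ j) (hbp : 0 < bp)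
    (hδ : 0 < δ) (hδ2 : δ < 2 * (j : ℝ) - 1)
    (hsum1 : Summable fun l => α l ^ 2)
    (hnorm : ∑' l : ℕ, α l ^ 2 = 1)
    (hsum2 : Summable fun l : ℕ => (r ^ 2 * ω - (2 * (l : ℝ) + 1) * bp) * α l ^ 2)
    (hpos : 0 ≤ ∑' l : ℕ, (r ^ 2 * ω - (2 * (l : ℝ) + 1) * bp) * α l ^ 2)
    (hupper : ∀ l : ℕ, l < j → r ^ 2 * ω - (2 * (l : ℝ) + 1) * bp ≤ 2 * (j : ℝ) * bp)
    (hlower : ∀ l : ℕ, j ≤ l →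
      ((2 * (j : ℝ) + 1) / (2 * (j : ℝ) - 1)) * δ * bp
        ≤ (2 * (l : ℝ) + 1) * bp - r ^ 2 * ω) :
    δ / (2 * (2 * (j : ℝ) - 1)) ≤ ∑ l ∈ Finset.range j, α l ^ 2 := by
  have hjm : (0:ℝ) < 2 * (j:ℝ) - 1 := hδ.trans hδ2
  set C : ℝ := ((2 * (j : ℝ) + 1) / (2 * (j : ℝ) - 1)) * δ * bp with hC
  have hCpos : 0 < C :=
    mul_pos (mul_pos (div_pos (by linarith) hjm) hδ) hbp
  set S : ℝ := ∑ l ∈ Finset.range j, α l ^ 2 with hS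
  have hS0 : 0 ≤ S := Finset.sum_nonneg fun i _ => sq_nonneg _
  -- tail sums
  have htail1 : Summable fun l => α (l + j) ^ 2 := (summable_nat_add_iff j).mpr hsum1
  have htails : (∑' l : ℕ, α (l + j) ^ 2) = 1 - S := by
    have := Summable.sum_add_tsum_nat_add j hsum1
    rw [hnorm] at this
    linarith
  have hS1 : S ≤ 1 := by
    have h0 : 0 ≤ ∑' l : ℕ, α (l + j) ^ 2 := tsum_nonneg fun i => sq_nonneg _
    linarith [htails ▸ h0]
  have htail2 : Summable fun l : ℕ => (r ^ 2 * ω - (2 * ((l + j : ℕ) : ℝ) + 1) * bp) * α (l + j) ^ 2 :=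
    (summable_nat_add_iff j).mpr hsum2
  have hsplit := Summable.sum_add_tsum_nat_add j hsum2
  -- bound the finite part
  have hfin : (∑ l ∈ Finset.range j, (r ^ 2 * ω - (2 * (l : ℝ) + 1) * bp) * α l ^ 2)
      ≤ 2 * (j:ℝ) * bp * S := by
    rw [hS, Finset.mul_sum]
    apply Finset.sum_le_sum
    intro i hi
    exact mul_le_mul_of_nonneg_right (hupper i (Finset.mem_range.mp hi)) (sq_nonneg _)
  -- bound the tail part
  have htb : (∑' l : ℕ, (r ^ 2 * ω - (2 * ((l + j : ℕ) : ℝ) + 1) * bp) * α (l + j) ^ 2)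
      ≤ ∑' l : ℕ, (-C) * α (l + j) ^ 2 := by
    apply Summable.tsum_le_tsum _ htail2 (htail1.mul_left _)
    intro i
    have := hlower (i + j) (Nat.le_add_left _ _)
    have h2 : r ^ 2 * ω - (2 * ((i + j : ℕ) : ℝ) + 1) * bp ≤ -C := by
      rw [hC]; linarith
    exact mul_le_mul_of_nonneg_right h2 (sq_nonneg _)
  have htbval : (∑' l : ℕ, (-C) * α (l + j) ^ 2) = -C * (1 - S) := by
    rw [tsum_mul_left, htails]
  -- combine
  have hmain : 0 ≤ 2 * (j:ℝ) * bp * S - C * (1 - S) := by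
    have h1 : (0:ℝ) ≤ (∑ l ∈ Finset.range j, (r ^ 2 * ω - (2 * (l : ℝ) + 1) * bp) * α l ^ 2)
        + (∑' l : ℕ, (r ^ 2 * ω - (2 * ((l + j : ℕ) : ℝ) + 1) * bp) * α (l + j) ^ 2) := by
      rw [hsplit]; exact hpos
    nlinarith [htb, htbval]
  -- final arithmetic
  have hCeq : C * (2 * (j:ℝ) - 1) = (2 * (j:ℝ) + 1) * δ * bp := by
    rw [hC]; field_simp
  rw [div_le_iff₀ (by linarith : (0:ℝ) < 2 * (2 * (j:ℝ) - 1))]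
  have hkey : C ≤ (2 * (j:ℝ) * bp + C) * S := by nlinarith
  have hkey2 : C * (2 * (j:ℝ) - 1) ≤ (2 * (j:ℝ) * bp + C) * S * (2 * (j:ℝ) - 1) :=
    mul_le_mul_of_nonneg_right hkey hjm.le
  have h3 : (2 * (j:ℝ) + 1) * δ * bp
      ≤ (2 * (j:ℝ) * bp * (2 * (j:ℝ) - 1) + (2 * (j:ℝ) + 1) * δ * bp) * S := by
    calc (2 * (j:ℝ) + 1) * δ * bp = C * (2 * (j:ℝ) - 1) := hCeq.symm
      _ ≤ (2 * (j:ℝ) * bp + C) * S * (2 * (j:ℝ) - 1) := hkey2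
      _ = (2 * (j:ℝ) * bp * (2 * (j:ℝ) - 1) + C * (2 * (j:ℝ) - 1)) * S := by ring
      _ = (2 * (j:ℝ) * bp * (2 * (j:ℝ) - 1) + (2 * (j:ℝ) + 1) * δ * bp) * S := by
          rw [hCeq]
  have h4 : δ * (S * bp * (2 * (j:ℝ) + 1)) ≤ (2 * (j:ℝ) - 1) * (S * bp * (2 * (j:ℝ) + 1)) :=
    mul_le_mul_of_nonneg_right hδ2.le
      (mul_nonneg (mul_nonneg hS0 hbp.le) (by linarith))
  nlinarith [h3, h4, mul_pos (show (0:ℝ) < (2 * (j:ℝ) + 1) * bp from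
      mul_pos (by linarith) hbp) hjm,
    mul_pos (show (0:ℝ) < 2 * (j:ℝ) + 1 by linarith) hbp,
    mul_nonneg (mul_nonneg hS0 hbp.le) hjm.le]
end

section
/- Let Q be continuous, nondecreasing and strictly positive on [x₀, ∞), and let ψ ∈ C²([x₀,∞)) be real, not identically zero, satisfy ψ'' = Qψ, with ψ(x), ψ'(x), Q(x)ψ(x)² → 0 and (ψ')² - Qψ² → 0 as x → +∞. Then for all x ≥ x₀: ψ'(x)ψ(x) < 0 and ψ(x)² ≤ ψ(x₀)² exp(-2∫_{x₀}^x Q(t)^{1/2} dt). -/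
open Filter

/-- Agmon-type decay in the classically forbidden region: if `ψ'' = Qψ` on
`[x₀,∞)` with `Q` continuous, nondecreasing and positive there, `ψ` not
identically zero, and `ψ, ψ', Qψ², (ψ')² - Qψ²` all tend to `0` at `+∞`, then
`ψ'ψ < 0` on `[x₀,∞)` and
`ψ(x)² ≤ ψ(x₀)² exp(-2 ∫_{x₀}^x √(Q(t)) dt)`. -/
theorem agmon_decay (x₀ : ℝ) (Q ψ : ℝ → ℝ)
    (hQc : ContinuousOn Q (Set.Ici x₀))
    (hQm : MonotoneOn Q (Set.Ici x₀))
    (hQpos : ∀ x ∈ Set.Ici x₀, 0 < Q x)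
    (hψC2 : ContDiff ℝ 2 ψ)
    (hψne : ∃ x ∈ Set.Ici x₀, ψ x ≠ 0)
    (heq : ∀ x ∈ Set.Ici x₀, deriv (deriv ψ) x = Q x * ψ x)
    (h1 : Tendsto ψ atTop (nhds 0))
    (h2 : Tendsto (deriv ψ) atTop (nhds 0))
    (h3 : Tendsto (fun x => Q x * ψ x ^ 2) atTop (nhds 0))
    (h4 : Tendsto (fun x => deriv ψ x ^ 2 - Q x * ψ x ^ 2) atTop (nhds 0)) :
    ∀ x ∈ Set.Ici x₀, deriv ψ x * ψ x < 0 ∧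
      ψ x ^ 2 ≤ ψ x₀ ^ 2 * Real.exp (-2 * ∫ t in x₀..x, Real.sqrt (Q t)) := by
  -- regularity facts
  have h2' : ContDiff ℝ ((1 : WithTop ℕ∞) + 1) ψ := by exact_mod_cast hψC2
  have ha' := (contDiff_succ_iff_deriv).mp h2'
  have hd1 : Differentiable ℝ ψ := ha'.1
  have h1' : ContDiff ℝ ((0 : WithTop ℕ∞) + 1) (deriv ψ) := by exact_mod_cast ha'.2.2
  have hb' := (contDiff_succ_iff_deriv).mp h1'
  have hd2 : Differentiable ℝ (deriv ψ) := hb'.1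
  -- P = ψ ψ'
  set P : ℝ → ℝ := fun y => ψ y * deriv ψ y with hPdef
  have hP : ∀ x : ℝ, HasDerivAt P (deriv ψ x * deriv ψ x + ψ x * deriv (deriv ψ) x) x :=
    fun x => (hd1 x).hasDerivAt.mul (hd2 x).hasDerivAt
  have hPc : Continuous P := (hd1.continuous).mul hd2.continuous
  have hPmono : MonotoneOn P (Set.Ici x₀) := by
    apply monotoneOn_of_deriv_nonneg (convex_Ici x₀) hPc.continuousOn
      (fun x _ => (hP x).differentiableAt.differentiableWithinAt)
    intro x hx
    rw [interior_Ici] at hx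
    have hx' : x ∈ Set.Ici x₀ := (le_of_lt hx : x₀ ≤ x)
    rw [(hP x).deriv, heq x hx']
    nlinarith [sq_nonneg (deriv ψ x), sq_nonneg (ψ x), mul_nonneg (hQpos x hx').le (sq_nonneg (ψ x))]
  have hPtend : Tendsto P atTop (nhds 0) := by
    have := h1.mul h2
    simpa using this
  have hPle : ∀ x ∈ Set.Ici x₀, P x ≤ 0 := by
    intro x hx
    refine ge_of_tendsto hPtend ?_
    filter_upwards [eventually_ge_atTop x] with y hy
    exact hPmono hx (le_trans hx hy) hy
  -- strict negativity of P
  have hPneg : ∀ x ∈ Set.Ici x₀, P x < 0 := by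
    intro a ha
    rcases lt_or_eq_of_le (hPle a ha) with h | h
    · exact h
    exfalso
    -- P a = 0; then P ≡ 0 on Ici a
    have hP0 : ∀ y ∈ Set.Ici a, P y = 0 := fun y hy =>
      le_antisymm (hPle y (le_trans ha hy : x₀ ≤ y)) (h ▸ hPmono ha (le_trans ha hy : x₀ ≤ y) hy)
    -- ψ² constant on Ici a
    have hu2 : ∀ x : ℝ, HasDerivAt (fun y => ψ y ^ 2) (2 * ψ x ^ 1 * deriv ψ x) x :=
      fun x => (hd1 x).hasDerivAt.pow 2
    have hucont : Continuous (fun y => ψ y ^ 2) := hd1.continuous.pow 2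
    have humono : MonotoneOn (fun y => ψ y ^ 2) (Set.Ici a) := by
      apply monotoneOn_of_deriv_nonneg (convex_Ici a) hucont.continuousOn
        (fun x _ => (hu2 x).differentiableAt.differentiableWithinAt)
      intro x hx
      rw [interior_Ici] at hx
      rw [(hu2 x).deriv]
      have := hP0 x (le_of_lt hx : a ≤ x)
      simp only [hPdef] at this
      nlinarith
    have huanti : AntitoneOn (fun y => ψ y ^ 2) (Set.Ici a) := by
      apply antitoneOn_of_deriv_nonpos (convex_Ici a) hucont.continuousOn
        (fun x _ => (hu2 x).differentiableAt.differentiableWithinAt)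
      intro x hx
      rw [interior_Ici] at hx
      rw [(hu2 x).deriv]
      have := hP0 x (le_of_lt hx : a ≤ x)
      simp only [hPdef] at this
      nlinarith
    have hconst : ∀ y ∈ Set.Ici a, ψ y ^ 2 = ψ a ^ 2 := fun y hy =>
      le_antisymm (huanti Set.self_mem_Ici hy hy) (humono Set.self_mem_Ici hy hy)
    have hsq0 : ψ a ^ 2 = 0 := by
      have ht1 : Tendsto (fun y => ψ y ^ 2) atTop (nhds 0) := by
        have := h1.pow 2; simpa using this
      have ht2 : Tendsto (fun y => ψ y ^ 2) atTop (nhds (ψ a ^ 2)) := by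
        refine Tendsto.congr' ?_ tendsto_const_nhds
        filter_upwards [eventually_ge_atTop a] with y hy
        exact (hconst y hy).symm
      exact (tendsto_nhds_unique ht2 ht1)
    have hψ0 : ∀ y ∈ Set.Ici a, ψ y = 0 := by
      intro y hy
      have : ψ y ^ 2 = 0 := by rw [hconst y hy, hsq0]
      exact (pow_eq_zero_iff two_ne_zero).mp this
    -- ψ' a = 0
    have hz : ∀ y ∈ Set.Ioi a, deriv ψ y = 0 := by
      intro y hy
      have hev : ψ =ᶠ[nhds y] fun _ => (0 : ℝ) := by
        filter_upwards [isOpen_Ioi.mem_nhds hy] with z hz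
        exact hψ0 z (le_of_lt hz : a ≤ z)
      rw [hev.deriv_eq]; simp
    have hψ'a : deriv ψ a = 0 := by
      have htc : Tendsto (deriv ψ) (nhdsWithin a (Set.Ioi a)) (nhds (deriv ψ a)) :=
        (hd2.continuous.continuousAt).continuousWithinAt
      have ht0 : Tendsto (deriv ψ) (nhdsWithin a (Set.Ioi a)) (nhds 0) := by
        refine tendsto_nhdsWithin_congr (fun y hy => (hz y hy).symm) tendsto_const_nhds
      exact tendsto_nhds_unique htc ht0
    -- backwards uniqueness on [x₀, a] via Gronwall-type monotonicity
    set C : ℝ := Q a + 1 with hCdef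
    set E : ℝ → ℝ := fun z => deriv ψ z ^ 2 + ψ z ^ 2 with hEdef
    set G : ℝ → ℝ := fun z => E z * Real.exp (C * z) with hGdef
    have hE' : ∀ z : ℝ, HasDerivAt E
        (2 * deriv ψ z ^ 1 * deriv (deriv ψ) z + 2 * ψ z ^ 1 * deriv ψ z) z :=
      fun z => ((hd2 z).hasDerivAt.pow 2).add ((hd1 z).hasDerivAt.pow 2)
    have hG' : ∀ z : ℝ, HasDerivAt G
        ((2 * deriv ψ z ^ 1 * deriv (deriv ψ) z + 2 * ψ z ^ 1 * deriv ψ z) * Real.exp (C * z)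
          + E z * (Real.exp (C * z) * (C * 1))) z := by
      intro z
      exact (hE' z).mul (((hasDerivAt_id z).const_mul C).exp)
    have hGc : Continuous G :=
      ((hd2.continuous.pow 2).add (hd1.continuous.pow 2)).mul
        ((continuous_const.mul continuous_id).rexp)
    have hGmono : MonotoneOn G (Set.Icc x₀ a) := by
      apply monotoneOn_of_deriv_nonneg (convex_Icc x₀ a) hGc.continuousOn
        (fun z _ => (hG' z).differentiableAt.differentiableWithinAt)
      intro z hz
      rw [interior_Icc] at hz
      have hz1 : z ∈ Set.Ici x₀ := le_of_lt hz.1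
      rw [(hG' z).deriv, heq z hz1]
      have hQz := hQpos z hz1
      have hQle : Q z ≤ Q a := hQm hz1 ha hz.2.le
      have he := Real.exp_pos (C * z)
      simp only [hEdef, hCdef]
      nlinarith [mul_nonneg (mul_nonneg he.le (by nlinarith : (0:ℝ) ≤ Q z + 1))
          (sq_nonneg (ψ z + deriv ψ z)),
        mul_nonneg (mul_nonneg he.le (sub_nonneg.mpr hQle))
          (by positivity : (0:ℝ) ≤ ψ z ^ 2 + deriv ψ z ^ 2)]
    have hGa : G a = 0 := by
      simp only [hGdef, hEdef, hψ'a, hψ0 a Set.self_mem_Ici]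
      ring
    have hψ0' : ∀ y ∈ Set.Icc x₀ a, ψ y = 0 := by
      intro y hy
      have h1g : G y ≤ 0 := hGa ▸ hGmono hy (Set.right_mem_Icc.mpr (Set.nonempty_Icc.mp ⟨y, hy⟩)) hy.2
      have h2g : 0 ≤ E y := by positivity
      have h3g := Real.exp_pos (C * y)
      have hEy : E y = 0 := by
        simp only [hGdef] at h1g
        by_contra hne
        have : 0 < E y := lt_of_le_of_ne h2g (Ne.symm hne)
        nlinarith [mul_pos this h3g]
      simp only [hEdef] at hEy
      nlinarith [sq_nonneg (ψ y), sq_nonneg (deriv ψ y)]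
    obtain ⟨w, hw, hwne⟩ := hψne
    rcases le_total w a with hwa | hwa
    · exact hwne (hψ0' w ⟨hw, hwa⟩)
    · exact hwne (hψ0 w hwa)
  -- pointwise bound (ψ')² ≥ Q ψ²
  have hC : ∀ x ∈ Set.Ici x₀, Q x * ψ x ^ 2 ≤ deriv ψ x ^ 2 := by
    intro x hx
    set g : ℝ → ℝ := fun y => deriv ψ y ^ 2 - Q x * ψ y ^ 2 with hgdef
    have hg' : ∀ y : ℝ, HasDerivAt g
        (2 * deriv ψ y ^ 1 * deriv (deriv ψ) y - Q x * (2 * ψ y ^ 1 * deriv ψ y)) y :=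
      fun y => ((hd2 y).hasDerivAt.pow 2).sub (((hd1 y).hasDerivAt.pow 2).const_mul (Q x))
    have hgc : Continuous g :=
      (hd2.continuous.pow 2).sub (continuous_const.mul (hd1.continuous.pow 2))
    have hganti : AntitoneOn g (Set.Ici x) := by
      apply antitoneOn_of_deriv_nonpos (convex_Ici x) hgc.continuousOn
        (fun y _ => (hg' y).differentiableAt.differentiableWithinAt)
      intro y hy
      rw [interior_Ici] at hy
      have hy' : y ∈ Set.Ici x₀ := (le_trans hx (le_of_lt (hy : x < y)) : x₀ ≤ y)
      rw [(hg' y).deriv, heq y hy']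
      have hQxy : Q x ≤ Q y := hQm hx hy' (le_of_lt hy)
      have hPy := hPneg y hy'
      simp only [hPdef] at hPy
      nlinarith [mul_nonneg (sub_nonneg.mpr hQxy) (neg_nonneg.mpr hPy.le)]
    have hgt : Tendsto g atTop (nhds 0) := by
      have ht1 : Tendsto (fun y => deriv ψ y ^ 2) atTop (nhds 0) := by
        have := h2.pow 2; simpa using this
      have ht2 : Tendsto (fun y => ψ y ^ 2) atTop (nhds 0) := by
        have := h1.pow 2; simpa using this
      have := ht1.sub (ht2.const_mul (Q x))
      simpa using this
    refine sub_nonneg.mp ?_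
    refine le_of_tendsto hgt ?_
    filter_upwards [eventually_ge_atTop x] with y hy
    exact hganti Set.self_mem_Ici hy hy
  -- conclusion
  intro X hX
  constructor
  · have := hPneg X hX
    simp only [hPdef] at this
    linarith [this, mul_comm (ψ X) (deriv ψ X)]
  -- decay estimate
  · set F : ℝ → ℝ := fun u => ∫ t in x₀..u, Real.sqrt (Q t) with hFdef
    set W : ℝ → ℝ := fun u => ψ u ^ 2 * Real.exp (2 * F u) with hWdef
    have hsqc : ContinuousOn (fun t => Real.sqrt (Q t)) (Set.Ici x₀) :=
      Real.continuous_sqrt.comp_continuousOn hQc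
    have hFc : ContinuousOn F (Set.Icc x₀ X) := by
      have hint : MeasureTheory.IntegrableOn (fun t => Real.sqrt (Q t))
          (Set.uIcc x₀ X) MeasureTheory.volume := by
        rw [Set.uIcc_of_le hX]
        exact (hsqc.mono Set.Icc_subset_Ici_self).integrableOn_compact isCompact_Icc
      have := intervalIntegral.continuousOn_primitive_interval hint
      rwa [Set.uIcc_of_le hX] at this
    have hWD : ∀ u ∈ Set.Ioo x₀ X, HasDerivAt W
        (2 * ψ u ^ 1 * deriv ψ u * Real.exp (2 * F u)
          + ψ u ^ 2 * (Real.exp (2 * F u) * (2 * Real.sqrt (Q u)))) u := by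
      intro u hu
      have hu' : x₀ < u := hu.1
      have hFu : HasDerivAt F (Real.sqrt (Q u)) u := by
        apply intervalIntegral.integral_hasDerivAt_right
        · apply ContinuousOn.intervalIntegrable
          refine hsqc.mono ?_
          rw [Set.uIcc_of_le hu'.le]
          exact Set.Icc_subset_Ici_self
        · exact (hsqc.mono (by rw [Set.Ioi]; exact fun z hz => (le_of_lt hz : x₀ ≤ z))
            : ContinuousOn _ (Set.Ioi x₀)).stronglyMeasurableAtFilter isOpen_Ioi u hu.1
        · exact hsqc.continuousAt (Ici_mem_nhds hu')
      exact ((hd1 u).hasDerivAt.pow 2).mul ((hFu.const_mul 2).exp)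
    have hWanti : AntitoneOn W (Set.Icc x₀ X) := by
      apply antitoneOn_of_deriv_nonpos (convex_Icc x₀ X)
        (((hd1.continuous.pow 2).continuousOn).mul ((continuousOn_const.mul hFc).rexp))
      · intro u hu
        rw [interior_Icc] at hu
        exact (hWD u hu).differentiableAt.differentiableWithinAt
      · intro u hu
        rw [interior_Icc] at hu
        have hu1 : u ∈ Set.Ici x₀ := le_of_lt hu.1
        change deriv W u ≤ 0
        rw [(hWD u hu).deriv]
        have hPu := hPneg u hu1
        simp only [hPdef] at hPu
        have hQu := hQpos u hu1
        have hCu := hC u hu1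
        have hs : Real.sqrt (Q u) ^ 2 = Q u := Real.sq_sqrt hQu.le
        have hsn : 0 ≤ Real.sqrt (Q u) := Real.sqrt_nonneg _
        have he := Real.exp_pos (2 * F u)
        -- key: √Q ψ² + ψψ' ≤ 0
        have hkey : Real.sqrt (Q u) * ψ u ^ 2 + ψ u * deriv ψ u ≤ 0 := by
          have habs : (Real.sqrt (Q u) * ψ u ^ 2) ^ 2 ≤ (ψ u * deriv ψ u) ^ 2 := by
            nlinarith [mul_le_mul_of_nonneg_right hCu (sq_nonneg (ψ u))]
          have hac : 0 < Real.sqrt (Q u) * ψ u ^ 2 - ψ u * deriv ψ u := by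
            nlinarith [mul_nonneg hsn (sq_nonneg (ψ u))]
          nlinarith [habs, hac]
        nlinarith [mul_nonpos_of_nonneg_of_nonpos he.le hkey,
          mul_le_mul_of_nonneg_left hkey (le_of_lt (mul_pos two_pos he))]
      
    have hWle : W X ≤ W x₀ := hWanti (Set.left_mem_Icc.mpr hX) (Set.right_mem_Icc.mpr hX) hX
    have hF0 : F x₀ = 0 := intervalIntegral.integral_same
    have hWx0 : W x₀ = ψ x₀ ^ 2 := by
      simp only [hWdef, hF0]
      simp
    rw [hWdef] at hWle
    simp only at hWle
    have he := Real.exp_pos (2 * F X)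
    have hrw : Real.exp (-2 * F X) = (Real.exp (2 * F X))⁻¹ := by
      rw [← Real.exp_neg]; ring_nf
    rw [show (-2 * ∫ t in x₀..X, Real.sqrt (Q t)) = -2 * F X from rfl, hrw,
      ← div_eq_mul_inv, le_div_iff₀ he]
    calc ψ X ^ 2 * Real.exp (2 * F X) ≤ W x₀ := hWle
      _ = ψ x₀ ^ 2 := hWx0
end

section
/- Let H ≥ 0 be self-adjoint, and let v be a symmetric operator with v² ≤ H in the quadratic-form sense on the domain of H. Let P(Δ), P(Δᶜ) be spectral projections of H for an interval Δ and its complement, and for ψ in the domain of H set φ = P(Δ)ψ, ξ = P(Δᶜ)ψ. Then ‖vξ‖² ≤ ‖ξ‖·‖Hψ‖, and consequently 2|⟨vξ, φ⟩| + |⟨vξ, ξ⟩| ≤ 3 ‖ξ‖^{1/2} ‖Hψ‖^{1/2} ‖ψ‖. -/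
open RealInnerProductSpace

/-- Cross-term estimate: let `T ≥ 0` be self-adjoint, `v` symmetric with
`v² ≤ T` in the quadratic-form sense (`‖vu‖² ≤ ⟪Tu, u⟫`), and `P` an
orthogonal (spectral) projection commuting with `T`. For `ψ` set `φ = Pψ`,
`ξ = ψ - Pψ`. Then `‖vξ‖² ≤ ‖ξ‖ ‖Tψ‖` and
`2|⟪vξ, φ⟫| + |⟪vξ, ξ⟫| ≤ 3 ‖ξ‖^{1/2} ‖Tψ‖^{1/2} ‖ψ‖`. -/
theorem velocity_cross_term_estimate
    {F : Type*} [NormedAddCommGroup F] [InnerProductSpace ℝ F] [CompleteSpace F]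
    (T v P : F →L[ℝ] F) (hT : IsSelfAdjoint T) (hv : IsSelfAdjoint v)
    (hTpos : ∀ u : F, 0 ≤ ⟪T u, u⟫)
    (hv2 : ∀ u : F, ‖v u‖ ^ 2 ≤ ⟪T u, u⟫)
    (hP : IsSelfAdjoint P) (hP2 : P ∘L P = P) (hcomm : T ∘L P = P ∘L T)
    (ψ : F) :
    ‖v (ψ - P ψ)‖ ^ 2 ≤ ‖ψ - P ψ‖ * ‖T ψ‖ ∧
      2 * |⟪v (ψ - P ψ), P ψ⟫| + |⟪v (ψ - P ψ), ψ - P ψ⟫|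
        ≤ 3 * Real.sqrt ‖ψ - P ψ‖ * Real.sqrt ‖T ψ‖ * ‖ψ‖ := by
  set ξ := ψ - P ψ with hξdef
  have hPs := hP.isSymmetric
  have hTs := hT.isSymmetric
  -- P ξ = 0
  have hPξ : P ξ = 0 := by
    have := congrArg (fun A : F →L[ℝ] F => A ψ) hP2
    simp only [ContinuousLinearMap.comp_apply] at this
    simp [hξdef, map_sub, this]
  -- P (T ξ) = 0
  have hPTξ : P (T ξ) = 0 := by
    have := congrArg (fun A : F →L[ℝ] F => A ξ) hcomm
    simp only [ContinuousLinearMap.comp_apply] at this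
    rw [← this, hPξ, map_zero]
  -- key identity ⟪T ξ, ξ⟫ = ⟪ξ, T ψ⟫
  have hkey : ⟪T ξ, ξ⟫ = ⟪ξ, T ψ⟫ := by
    have h1 : ⟪T ξ, P ψ⟫ = 0 := by
      have := hPs (T ξ) ψ
      simp only [ContinuousLinearMap.coe_coe] at this
      rw [← this, hPTξ, inner_zero_left]
    have : ⟪T ξ, ξ⟫ = ⟪T ξ, ψ⟫ := by
      rw [hξdef]
      rw [inner_sub_right, h1]
      ring
    rw [this]
    have := hTs ξ ψ
    simpa using this
  -- first claim
  have h1 : ‖v ξ‖ ^ 2 ≤ ‖ξ‖ * ‖T ψ‖ := by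
    calc ‖v ξ‖ ^ 2 ≤ ⟪T ξ, ξ⟫ := hv2 ξ
      _ = ⟪ξ, T ψ⟫ := hkey
      _ ≤ ‖ξ‖ * ‖T ψ‖ := real_inner_le_norm ξ (T ψ)
  refine ⟨h1, ?_⟩
  -- ‖v ξ‖ ≤ √‖ξ‖ √‖Tψ‖
  have hvξ : ‖v ξ‖ ≤ Real.sqrt ‖ξ‖ * Real.sqrt ‖T ψ‖ := by
    rw [← Real.sqrt_mul_self (norm_nonneg (v ξ)), ← Real.sqrt_mul (norm_nonneg ξ)]
    apply Real.sqrt_le_sqrt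
    nlinarith [h1]
  -- ‖P ψ‖ ≤ ‖ψ‖ and ‖ξ‖ ≤ ‖ψ‖
  have hφψ : ⟪P ψ, ξ⟫ = 0 := by
    have := hPs ψ ξ
    simp only [ContinuousLinearMap.coe_coe] at this
    rw [this, hPξ, inner_zero_right]
  have hpyth : ‖P ψ‖ ^ 2 + ‖ξ‖ ^ 2 = ‖ψ‖ ^ 2 := by
    have hψ : P ψ + ξ = ψ := by rw [hξdef]; abel
    have h := norm_add_sq_real (P ψ) ξ
    rw [hφψ, hψ] at h
    linarith
  have hφ : ‖P ψ‖ ≤ ‖ψ‖ := by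
    nlinarith [norm_nonneg (P ψ), norm_nonneg ψ, norm_nonneg ξ]
  have hξn : ‖ξ‖ ≤ ‖ψ‖ := by
    nlinarith [norm_nonneg (P ψ), norm_nonneg ψ, norm_nonneg ξ]
  have hc1 : |⟪v ξ, P ψ⟫| ≤ ‖v ξ‖ * ‖ψ‖ :=
    le_trans (abs_real_inner_le_norm _ _)
      (mul_le_mul_of_nonneg_left hφ (norm_nonneg _))
  have hc2 : |⟪v ξ, ξ⟫| ≤ ‖v ξ‖ * ‖ψ‖ :=
    le_trans (abs_real_inner_le_norm _ _)
      (mul_le_mul_of_nonneg_left hξn (norm_nonneg _))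
  have hψn : (0:ℝ) ≤ ‖ψ‖ := norm_nonneg ψ
  calc 2 * |⟪v ξ, P ψ⟫| + |⟪v ξ, ξ⟫| ≤ 3 * (‖v ξ‖ * ‖ψ‖) := by linarith
    _ ≤ 3 * Real.sqrt ‖ξ‖ * Real.sqrt ‖T ψ‖ * ‖ψ‖ := by
        nlinarith [mul_le_mul_of_nonneg_right hvξ hψn]
end
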